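/- arXiv:1607.02081 — 3 statements merged into one kernel-verified Lean document; each statement's English description precedes it below -/
import Mathlib

section
/- Let ε > 0 and let n ≥ 3 be an integer. There exists δ > 0 such that for all primes p, q with |log q/log p − φ| < δ, there is a unique positive real number t_n(p,q) satisfying max(h_n·log p, h_{n−1}·log q)^{t} = max(h_{n−1}·log p, h_{n−2}·log q)^{t} + max(h_{n−2}·log p, h_{n−3}·log q)^{t}, and it satisfies |s_n − t_n(p,q)| < ε. -/
open Real

/-- The golden ratio `(1 + √5)/2`. -/
noncomputable def phiR : ℝ := (1 + Real.sqrt 5) / 2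

/-- `mmax p q n = max(h_n·log p, h_{n-1}·log q)`, the logarithmic Mahler measure
of `p^{h_n}/q^{h_{n-1}}` for distinct primes `p`, `q`, where `h` is Fibonacci. -/
noncomputable def mmax (p q n : ℕ) : ℝ :=
  max ((Nat.fib n : ℝ) * Real.log p) ((Nat.fib (n - 1) : ℝ) * Real.log q)

/-- `gmax n = max(h_n, φ·h_{n-1})`. -/
noncomputable def gmax (n : ℕ) : ℝ :=
  max (Nat.fib n : ℝ) (phiR * (Nat.fib (n - 1) : ℝ))

/-- The equation defining `t_n(p,q)`:
`m(p^{h_n}/q^{h_{n-1}})^t = m(p^{h_{n-1}}/q^{h_{n-2}})^t + m(p^{h_{n-2}}/q^{h_{n-3}})^t`. -/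
def peq (p q n : ℕ) (t : ℝ) : Prop :=
  mmax p q n ^ t = mmax p q (n - 1) ^ t + mmax p q (n - 2) ^ t

/-- The equation defining `s_n`:
`max(h_n, φ h_{n-1})^t = max(h_{n-1}, φ h_{n-2})^t + max(h_{n-2}, φ h_{n-3})^t`. -/
def geq (n : ℕ) (t : ℝ) : Prop :=
  gmax n ^ t = gmax (n - 1) ^ t + gmax (n - 2) ^ t

/-- Condition (W) on a pair of primes `(p,q)` relative to `N`. -/
def CondW (N p q : ℕ) : Prop :=
  ((Nat.fib N : ℝ) / Nat.fib (N - 1) < Real.log q / Real.log p ∧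
    Real.log q / Real.log p < (Nat.fib (N - 1) : ℝ) / Nat.fib (N - 2)) ∨
  ((Nat.fib (N - 1) : ℝ) / Nat.fib (N - 2) < Real.log q / Real.log p ∧
    Real.log q / Real.log p < (Nat.fib N : ℝ) / Nat.fib (N - 1))

/-- `V_n`: vectors `x ∈ ℕ^N` (1-based entry `i` is `x ⟨i-1⟩`) with
`Σ x_i h_i = h_n` and `Σ x_i h_{i-1} = h_{n-1}`. -/
def Vset (N n : ℕ) : Set (Fin N → ℕ) :=
  {x | ∑ i, x i * Nat.fib ((i : ℕ) + 1) = Nat.fib n ∧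
       ∑ i, x i * Nat.fib (i : ℕ) = Nat.fib (n - 1)}

/-- The measure function `f_x(t) = (Σ_{i=1}^N x_i·max(h_i log p, h_{i-1} log q)^t)^{1/t}`. -/
noncomputable def fmeas (N p q : ℕ) (x : Fin N → ℕ) (t : ℝ) : ℝ :=
  (∑ i, (x i : ℝ) * mmax p q ((i : ℕ) + 1) ^ t) ^ (1 / t)

/-- `x_n(i)`: the vector whose (i−2)nd (1-based) entry is `h_{n+1−i}`, whose
(i−1)st entry is `h_{n+2−i}`, and whose other entries are 0.  (For `i = 2`, `n = 1`
this gives `x_1(2) = (1,0,…,0)`.) -/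
def xvec (N n i : ℕ) : Fin N → ℕ := fun j =>
  if (j : ℕ) + 3 = i then Nat.fib (n + 1 - i)
  else if (j : ℕ) + 2 = i then Nat.fib (n + 2 - i)
  else 0

/-- `S_n = {x_n(i) : 3 ≤ i ≤ n+1}` for `n ≥ 2`, and `S_1 = {x_1(2)}`. -/
def Sset (N n : ℕ) : Set (Fin N → ℕ) :=
  if n = 1 then {xvec N 1 2}
  else {x | ∃ i, 3 ≤ i ∧ i ≤ n + 1 ∧ x = xvec N n i}

/-- `z` is almost consecutive-free: `z_j·z_{j+1} ≠ 0` implies `z_i = 0` for all `i > j+1`. -/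
def ACF (N : ℕ) (z : Fin N → ℕ) : Prop :=
  ∀ (j : Fin N) (hj : (j : ℕ) + 1 < N),
    z j * z ⟨(j : ℕ) + 1, hj⟩ ≠ 0 → ∀ i : Fin N, (j : ℕ) + 1 < (i : ℕ) → z i = 0

/-- `C_n`: the almost consecutive-free elements of `V_n`. -/
def Cset (N n : ℕ) : Set (Fin N → ℕ) := {z ∈ Vset N n | ACF N z}

/-- A factorization of `z ∈ V_n`: a `K`-tuple `x` with `x k ∈ V_{idx k}`,
`1 ≤ idx k ≤ n`, and `z = Σ_k x k`. -/
def IsFactorization (N n : ℕ) (z : Fin N → ℕ) {K : ℕ}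
    (idx : Fin K → ℕ) (x : Fin K → Fin N → ℕ) : Prop :=
  (∀ k, 1 ≤ idx k ∧ idx k ≤ n ∧ x k ∈ Vset N (idx k)) ∧ z = ∑ k, x k

/-- A tuple is `S`-type if each component lies in `∪_{i=1}^n S_i`. -/
def STypeFac (N n : ℕ) {K : ℕ} (x : Fin K → Fin N → ℕ) : Prop :=
  ∀ k, ∃ i, 1 ≤ i ∧ i ≤ n ∧ x k ∈ Sset N i

/-- `z` is `S`-restricted: every non-trivial (i.e. `K ≠ 1`) factorization is `S`-type. -/
def SRestricted (N n : ℕ) (z : Fin N → ℕ) : Prop :=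
  ∀ (K : ℕ) (idx : Fin K → ℕ) (x : Fin K → Fin N → ℕ),
    IsFactorization N n z idx x → K ≠ 1 → STypeFac N n x

/-- `R_n`: the `S`-restricted elements of `C_n`. -/
def Rset (N n : ℕ) : Set (Fin N → ℕ) := {z ∈ Cset N n | SRestricted N n z}

/-- The infimum attaining set `U_x = {t > 0 : f_x(t) = min{f_y(t) : y ∈ V_j}}`. -/
def Uset (N p q j : ℕ) (x : Fin N → ℕ) : Set ℝ :=
  {t | 0 < t ∧ IsLeast ((fun y => fmeas N p q y t) '' Vset N j) (fmeas N p q x t)}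

/-- The shift map `λ((x_1,…,x_N)) = (0,x_1,…,x_{N-1})`. -/
def shiftMap (N : ℕ) (x : Fin N → ℕ) : Fin N → ℕ := fun j =>
  if (j : ℕ) = 0 then 0
  else x ⟨(j : ℕ) - 1, lt_of_le_of_lt (Nat.sub_le _ _) j.isLt⟩

/-!
Put `r = log q / log p`. Then `mmax p q k = log p · max(h_k, h_{k-1} r)` and
`gmax k = max(h_k, h_{k-1} φ)`, so after dividing by the largest term both equations read
`F_r(t) = 1` with `F_r(t) = (B_r/A_r)^t + (C_r/A_r)^t`, at `r = log q / log p` and at `r = φ`.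
For `r < 2` both ratios lie in `(0, 1)`, so `F_r` is strictly decreasing in `t`, which gives
uniqueness; and `F_r(t)` is continuous in `r`. Since `F_φ(s_n - ε) > 1 > F_φ(s_n + ε)`, the same
strict inequalities hold for `r` close to `φ`, and the intermediate value theorem gives a root
of `F_r` within `ε` of `s_n`.
-/

open Real Filter Topology Set

theorem eventually_exists_mem_Ioo_eq {X : Type*} [TopologicalSpace X] {f : X → ℝ → ℝ}
    {x₀ : X} {s ε c : ℝ} (hε : 0 < ε) (hf : ∀ x, Continuous (f x))
    (hfx : ∀ t, ContinuousAt (fun x ↦ f x t) x₀) (hanti : StrictAnti (f x₀))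
    (hs : f x₀ s = c) :
    ∀ᶠ x in 𝓝 x₀, ∃ t ∈ Ioo (s - ε) (s + ε), f x t = c := by
  have hlo : ∀ᶠ x in 𝓝 x₀, c < f x (s - ε) :=
    (hfx _).eventually (lt_mem_nhds (hs ▸ hanti (by linarith)))
  have hhi : ∀ᶠ x in 𝓝 x₀, f x (s + ε) < c :=
    (hfx _).eventually (gt_mem_nhds (hs ▸ hanti (by linarith)))
  filter_upwards [hlo, hhi] with x hlo hhi
  exact intermediate_value_Ioo' (by linarith) (hf x).continuousOn ⟨hhi, hlo⟩

theorem rpow_eq_rpow_add_rpow_iff {a b c t : ℝ} (ha : 0 < a) (hb : 0 ≤ b) (hc : 0 ≤ c) :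
    a ^ t = b ^ t + c ^ t ↔ (b / a) ^ t + (c / a) ^ t = 1 := by
  rw [div_rpow hb ha.le, div_rpow hc ha.le, ← add_div,
    div_eq_one_iff_eq (rpow_pos_of_pos ha t).ne', eq_comm]

theorem strictAnti_rpow_add_rpow {u v : ℝ} (hu : 0 < u) (hu1 : u < 1) (hv : 0 < v)
    (hv1 : v < 1) : StrictAnti fun t : ℝ ↦ u ^ t + v ^ t := fun _ _ hxy ↦
  add_lt_add (rpow_lt_rpow_of_exponent_gt hu hu1 hxy) (rpow_lt_rpow_of_exponent_gt hv hv1 hxy)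

theorem phiR_lt_two : phiR < 2 := by
  have : √5 < 3 := by rw [sqrt_lt' (by norm_num)]; norm_num
  unfold phiR
  linarith

noncomputable def fibMax (r : ℝ) (k : ℕ) : ℝ :=
  max (Nat.fib k : ℝ) (Nat.fib (k - 1) * r)

theorem continuous_fibMax (k : ℕ) : Continuous fun r ↦ fibMax r k :=
  continuous_const.max (continuous_const.mul continuous_id)

theorem fibMax_pos (r : ℝ) {k : ℕ} (hk : 1 ≤ k) : 0 < fibMax r k :=
  lt_max_of_lt_left (by exact_mod_cast Nat.fib_pos.mpr hk)

theorem fibMax_lt_fibMax {r : ℝ} (hr : r < 2) {j m : ℕ} (hm : 3 ≤ m) (hj : j < m) :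
    fibMax r j < fibMax r m := by
  obtain ⟨k, rfl⟩ : ∃ k, m = k + 3 := ⟨m - 3, by omega⟩
  have hfib : (Nat.fib (k + 3) : ℝ) = Nat.fib (k + 1) + Nat.fib (k + 2) := by
    exact_mod_cast Nat.fib_add_two
  have hpos : (0 : ℝ) < Nat.fib (k + 1) := by exact_mod_cast Nat.fib_pos.mpr (by omega)
  have hj1 : (Nat.fib j : ℝ) ≤ Nat.fib (k + 2) := by exact_mod_cast Nat.fib_mono (by omega)
  have hj2 : (Nat.fib (j - 1) : ℝ) ≤ Nat.fib (k + 1) := by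
    exact_mod_cast Nat.fib_mono (by omega)
  have hk12 : (Nat.fib (k + 1) : ℝ) ≤ Nat.fib (k + 2) := by
    exact_mod_cast Nat.fib_mono (by omega)
  have hr' : (Nat.fib (j - 1) : ℝ) * r < Nat.fib (k + 3) := by
    rcases le_or_gt r 0 with hr0 | hr0
    · nlinarith [mul_nonpos_of_nonneg_of_nonpos (Nat.cast_nonneg (Nat.fib (j - 1))) hr0]
    · nlinarith
  exact lt_max_of_lt_left (max_lt (by linarith) hr')

theorem gmax_eq_fibMax (k : ℕ) : gmax k = fibMax phiR k := by
  rw [gmax, fibMax, mul_comm]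

theorem mmax_eq_log_mul_fibMax {p : ℕ} (q k : ℕ) (hp : 0 < log p) :
    mmax p q k = log p * fibMax (log q / log p) k := by
  rw [mmax, fibMax, mul_max_of_nonneg _ _ hp.le]
  congr 1
  · ring
  · field_simp

noncomputable def fibRatioSum (n : ℕ) (r t : ℝ) : ℝ :=
  (fibMax r (n - 1) / fibMax r n) ^ t + (fibMax r (n - 2) / fibMax r n) ^ t

section fibRatioSum

variable {n : ℕ} (hn : 3 ≤ n)
include hn

theorem fibMax_rpow_eq_iff_fibRatioSum_eq_one (r t : ℝ) :
    fibMax r n ^ t = fibMax r (n - 1) ^ t + fibMax r (n - 2) ^ t ↔ fibRatioSum n r t = 1 :=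
  rpow_eq_rpow_add_rpow_iff (fibMax_pos r (by omega)) (fibMax_pos r (by omega)).le
    (fibMax_pos r (by omega)).le

theorem geq_iff_fibRatioSum_eq_one (t : ℝ) : geq n t ↔ fibRatioSum n phiR t = 1 := by
  rw [geq, gmax_eq_fibMax, gmax_eq_fibMax, gmax_eq_fibMax,
    fibMax_rpow_eq_iff_fibRatioSum_eq_one hn]

theorem peq_iff_fibRatioSum_eq_one {p : ℕ} (q : ℕ) (hp : 0 < log p) (t : ℝ) :
    peq p q n t ↔ fibRatioSum n (log q / log p) t = 1 := by
  set r := log q / log p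
  rw [peq, mmax_eq_log_mul_fibMax q n hp, mmax_eq_log_mul_fibMax q (n - 1) hp,
    mmax_eq_log_mul_fibMax q (n - 2) hp, mul_rpow hp.le (fibMax_pos r (by omega)).le,
    mul_rpow hp.le (fibMax_pos r (by omega)).le, mul_rpow hp.le (fibMax_pos r (by omega)).le,
    ← mul_add, mul_right_inj' (rpow_pos_of_pos hp t).ne',
    fibMax_rpow_eq_iff_fibRatioSum_eq_one hn]

theorem strictAnti_fibRatioSum {r : ℝ} (hr : r < 2) : StrictAnti (fibRatioSum n r) := by
  have hA := fibMax_pos r (show 1 ≤ n by omega)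
  exact strictAnti_rpow_add_rpow (div_pos (fibMax_pos r (by omega)) hA)
    ((div_lt_one hA).2 (fibMax_lt_fibMax hr hn (by omega)))
    (div_pos (fibMax_pos r (by omega)) hA)
    ((div_lt_one hA).2 (fibMax_lt_fibMax hr hn (by omega)))

theorem continuous_fibRatioSum (r : ℝ) : Continuous (fibRatioSum n r) := by
  have hA := fibMax_pos r (show 1 ≤ n by omega)
  exact (continuous_const_rpow (div_pos (fibMax_pos r (by omega)) hA).ne').add
    (continuous_const_rpow (div_pos (fibMax_pos r (by omega)) hA).ne')

theorem continuous_fibRatioSum_left (t : ℝ) : Continuous fun r ↦ fibRatioSum n r t := by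
  have hratio (k : ℕ) (hk : 1 ≤ k) :
      Continuous fun r ↦ (fibMax r k / fibMax r n) ^ t :=
    ((continuous_fibMax k).div (continuous_fibMax n)
      fun r ↦ (fibMax_pos r (by omega)).ne').rpow_const
      fun r ↦ Or.inl (div_pos (fibMax_pos r hk) (fibMax_pos r (by omega))).ne'
  exact (hratio (n - 1) (by omega)).add (hratio (n - 2) (by omega))

end fibRatioSum

/-- Lemma `TApprox`: let `ε > 0` and `n ≥ 3`.  There is `δ > 0` such that for
all primes `p, q` with `|log q / log p − φ| < δ`, there is a unique positive real `t_n(p,q)`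
satisfying the Mahler-measure equation, and it satisfies `|s_n − t_n(p,q)| < ε`. -/
theorem stmt3 (s : ℕ → ℝ) (hs : ∀ m : ℕ, 3 ≤ m → 0 < s m ∧ geq m (s m))
    (ε : ℝ) (hε : 0 < ε) (n : ℕ) (hn : 3 ≤ n) :
    ∃ δ : ℝ, 0 < δ ∧ ∀ p q : ℕ, p.Prime → q.Prime →
      |Real.log q / Real.log p - phiR| < δ →
      ∃ t : ℝ, (0 < t ∧ peq p q n t) ∧ (∀ t' : ℝ, 0 < t' → peq p q n t' → t' = t) ∧
        |s n - t| < ε := by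
  obtain ⟨hs_pos, hs_root⟩ := hs n hn
  set η := min ε (s n)
  have hη : 0 < η := lt_min hε hs_pos
  have hroots : ∀ᶠ r in 𝓝 phiR,
      r < 2 ∧ ∃ t ∈ Ioo (s n - η) (s n + η), fibRatioSum n r t = 1 :=
    (gt_mem_nhds phiR_lt_two).and <| eventually_exists_mem_Ioo_eq hη
      (continuous_fibRatioSum hn) (fun t ↦ (continuous_fibRatioSum_left hn t).continuousAt)
      (strictAnti_fibRatioSum hn phiR_lt_two) ((geq_iff_fibRatioSum_eq_one hn _).1 hs_root)
  obtain ⟨δ, hδ, hball⟩ := Metric.eventually_nhds_iff.1 hroots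
  refine ⟨δ, hδ, fun p q hp _ hpq ↦ ?_⟩
  have hlogp : 0 < log p := log_pos (by exact_mod_cast hp.one_lt)
  obtain ⟨hr, t, ⟨hlo, hhi⟩, ht⟩ := hball (show dist _ phiR < δ from hpq)
  have hη_le : η ≤ ε ∧ η ≤ s n := ⟨min_le_left _ _, min_le_right _ _⟩
  refine ⟨t, ⟨by linarith, (peq_iff_fibRatioSum_eq_one hn q hlogp t).2 ht⟩,
    fun t' _ ht' ↦ (strictAnti_fibRatioSum hn hr).injective
      (((peq_iff_fibRatioSum_eq_one hn q hlogp t').1 ht').trans ht.symm), ?_⟩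
  rw [abs_sub_lt_iff]
  constructor <;> linarith
end

section
/- For every integer N ≥ 3 there exists δ > 0 such that for all primes p, q with |log q/log p − φ| < δ, the pair (p,q) is compatible with N; that is, (p,q) satisfies condition (W), for each 3 ≤ n ≤ N+1 there is a unique positive real t_n(p,q) satisfying max(h_n·log p, h_{n−1}·log q)^{t} = max(h_{n−1}·log p, h_{n−2}·log q)^{t} + max(h_{n−2}·log p, h_{n−3}·log q)^{t}, and these satisfy t_{N+1} < t_N < ⋯ < t_4 < t_3. -/
open Real

section AuxiliaryIW
open goldenRatio

lemma phiR_eq : phiR = goldenRatio := rfl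

lemma sqrt5_lb : (2.2360 : ℝ) ≤ Real.sqrt 5 := by
  have h := Real.sqrt_le_sqrt (show ((2.2360:ℝ))^2 ≤ 5 by norm_num)
  rwa [Real.sqrt_sq (by norm_num)] at h

lemma sqrt5_ub : Real.sqrt 5 ≤ 2.2361 := by
  have h := Real.sqrt_le_sqrt (show (5:ℝ) ≤ 2.2361^2 by norm_num)
  rwa [Real.sqrt_sq (by norm_num)] at h

lemma phiR_lb : (1.6180 : ℝ) ≤ phiR := by unfold phiR; nlinarith [sqrt5_lb]
lemma phiR_ub : phiR ≤ 1.61805 := by unfold phiR; nlinarith [sqrt5_ub]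
lemma one_lt_phiR : 1 < phiR := lt_of_lt_of_le (by norm_num) phiR_lb
lemma phiR_pos : 0 < phiR := lt_trans one_pos one_lt_phiR
lemma phiR_sq : phiR^2 = phiR + 1 := by rw [phiR_eq]; exact goldenRatio_sq
lemma sqrt5_eq : Real.sqrt 5 = 2*phiR - 1 := by unfold phiR; ring
lemma sqrt5_pos : (0:ℝ) < Real.sqrt 5 := lt_of_lt_of_le (by norm_num) sqrt5_lb
lemma phiR_pow_pos (m : ℕ) : (0:ℝ) < phiR^m := pow_pos phiR_pos m

lemma goldenConj_eq : (goldenConj : ℝ) = -phiR⁻¹ := by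
  rw [phiR_eq, inv_goldenRatio, neg_neg]

-- Binet for odd index
lemma fib_odd_binet {m : ℕ} (hm : Odd m) :
    Real.sqrt 5 * (Nat.fib m : ℝ) = phiR^m + (phiR^m)⁻¹ := by
  have h5 : Real.sqrt 5 ≠ 0 := ne_of_gt sqrt5_pos
  have hψm : (goldenConj:ℝ)^m = -(phiR^m)⁻¹ := by
    rw [goldenConj_eq, hm.neg_pow, inv_pow]
  rw [Real.coe_fib_eq, ← phiR_eq, hψm, sub_neg_eq_add, mul_comm, div_mul_cancel₀ _ h5]

lemma phi_pow4 : phiR^2 * phiR^2 = Real.sqrt 5 * phiR^2 + 1 := by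
  rw [sqrt5_eq]
  nlinarith [phiR_sq]

-- identity: phi^2 * F_m = F_{m+2} + phi^{-m} for odd m
lemma phi_sq_fib {m : ℕ} (hm : Odd m) :
    phiR^2 * (Nat.fib m : ℝ) = (Nat.fib (m+2) : ℝ) + (phiR^m)⁻¹ := by
  have h5 : Real.sqrt 5 ≠ 0 := ne_of_gt sqrt5_pos
  have hm2 : Odd (m+2) := hm.add_even (by norm_num)
  have b1 := fib_odd_binet hm
  have b2 := fib_odd_binet hm2
  have hP : phiR^m ≠ 0 := ne_of_gt (phiR_pow_pos m)
  have hφ2 : phiR^2 ≠ 0 := ne_of_gt (phiR_pow_pos 2)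
  apply mul_left_cancel₀ h5
  symm
  have hpow : phiR^(m+2) = phiR^m * phiR^2 := pow_add phiR m 2
  have h6 : (phiR^2)⁻¹ + Real.sqrt 5 = phiR^2 := by
    have hinv : phiR^2 - Real.sqrt 5 = (phiR^2)⁻¹ :=
      eq_inv_of_mul_eq_one_left (by linear_combination phi_pow4)
    linarith [hinv]
  have key : phiR^(m+2) + (phiR^(m+2))⁻¹ + Real.sqrt 5 * (phiR^m)⁻¹
      = phiR^2 * (phiR^m + (phiR^m)⁻¹) := by
    rw [hpow, mul_inv]
    linear_combination (phiR^m)⁻¹ * h6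
  calc Real.sqrt 5 * ((Nat.fib (m+2):ℝ) + (phiR^m)⁻¹)
      = phiR^(m+2) + (phiR^(m+2))⁻¹ + Real.sqrt 5 * (phiR^m)⁻¹ := by rw [mul_add, b2]
    _ = phiR^2 * (phiR^m + (phiR^m)⁻¹) := key
    _ = phiR^2 * (Real.sqrt 5 * (Nat.fib m:ℝ)) := by rw [b1]
    _ = Real.sqrt 5 * (phiR^2 * (Nat.fib m:ℝ)) := by ring

-- phi * F_k vs F_{k+1}
lemma phi_fib_lt {k : ℕ} (hk : Even k) : phiR * (Nat.fib k : ℝ) < Nat.fib (k+1) := by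
  have h := fib_succ_sub_goldenRatio_mul_fib k
  rw [← phiR_eq] at h
  have hψpos : (0:ℝ) < goldenConj ^ k := hk.pow_pos goldenConj_ne_zero
  linarith [h]

lemma fib_lt_phi_fib {k : ℕ} (hk : Odd k) : (Nat.fib (k+1) : ℝ) < phiR * Nat.fib k := by
  have h := fib_succ_sub_goldenRatio_mul_fib k
  rw [← phiR_eq] at h
  have hψneg : goldenConj ^ k < 0 := hk.pow_neg goldenConj_neg
  linarith [h]


-- log helpers
lemma log_ge_one_sub_inv {x : ℝ} (hx : 0 < x) : 1 - x⁻¹ ≤ Real.log x := by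
  have h := Real.log_le_sub_one_of_pos (inv_pos.mpr hx)
  rw [Real.log_inv] at h
  linarith

lemma log_one_add_ge {x : ℝ} (hx : 0 ≤ x) : x - x^2 ≤ Real.log (1+x) := by
  have h1 : (0:ℝ) < 1 + x := by linarith
  have h := log_ge_one_sub_inv h1
  have h2 : 1 - (1+x)⁻¹ = x/(1+x) := by field_simp; ring
  have h3 : x - x^2 ≤ x/(1+x) := by
    rw [le_div_iff₀ h1]; nlinarith
  linarith [h2 ▸ h]

lemma log_one_add_le {x : ℝ} (hx : 0 ≤ x) : Real.log (1+x) ≤ x := by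
  have := Real.log_le_sub_one_of_pos (show (0:ℝ) < 1+x by linarith)
  linarith

-- Cassini in ℤ
lemma fib_cassini (m : ℕ) : (Nat.fib (m+1) : ℤ)^2 - Nat.fib (m+2) * Nat.fib m = (-1)^m := by
  induction m with
  | zero => simp
  | succ k ih =>
    have h1 : (Nat.fib (k+2) : ℤ) = Nat.fib k + Nat.fib (k+1) := by
      exact_mod_cast congrArg (Nat.cast : ℕ → ℤ) (Nat.fib_add_two (n := k))
    have h2 : (Nat.fib (k+3) : ℤ) = Nat.fib (k+1) + Nat.fib (k+2) := by
      exact_mod_cast congrArg (Nat.cast : ℕ → ℤ) (Nat.fib_add_two (n := k+1))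
    show (Nat.fib (k+2) : ℤ)^2 - Nat.fib (k+3) * Nat.fib (k+1) = (-1)^(k+1)
    rw [h2, h1]
    rw [h1] at ih
    have hp : ((-1:ℤ))^(k+1) = -(-1)^k := by ring
    rw [hp]
    linear_combination -ih

-- Catalan k=2 for odd m, in ℝ
lemma fib_catalan2 {m : ℕ} (hm : Odd m) :
    (Nat.fib (m+4) : ℝ) * Nat.fib m = (Nat.fib (m+2):ℝ)^2 + 1 := by
  have key : (Nat.fib (m+4) : ℤ) * Nat.fib m = (Nat.fib (m+2):ℤ)^2 + 1 := by
    have hc := fib_cassini m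
    have hm1 : ((-1:ℤ))^m = -1 := hm.neg_one_pow
    have h1 : (Nat.fib (m+2) : ℤ) = Nat.fib m + Nat.fib (m+1) := by
      exact_mod_cast congrArg (Nat.cast : ℕ → ℤ) (Nat.fib_add_two (n := m))
    have h2 : (Nat.fib (m+3) : ℤ) = Nat.fib (m+1) + Nat.fib (m+2) := by
      exact_mod_cast congrArg (Nat.cast : ℕ → ℤ) (Nat.fib_add_two (n := m+1))
    have h3 : (Nat.fib (m+4) : ℤ) = Nat.fib (m+2) + Nat.fib (m+3) := by
      exact_mod_cast congrArg (Nat.cast : ℕ → ℤ) (Nat.fib_add_two (n := m+2))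
    rw [hm1] at hc
    rw [h3, h2, h1]
    rw [h1] at hc
    linear_combination -hc
  exact_mod_cast key

-- xi
noncomputable def xi (e : ℝ) : ℝ := (1 + e + Real.sqrt ((1+e)^2 + 4))/2

lemma xi_sq {e : ℝ} : xi e ^ 2 = (1+e) * xi e + 1 := by
  have h : Real.sqrt ((1+e)^2+4) ^ 2 = (1+e)^2 + 4 :=
    Real.sq_sqrt (by positivity)
  unfold xi
  nlinarith [h]

lemma xi_ge {e : ℝ} (he : 0 ≤ e) : 1.5 ≤ xi e := by
  have h : (2:ℝ) ≤ Real.sqrt ((1+e)^2+4) := by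
    have := Real.sqrt_le_sqrt (show (2:ℝ)^2 ≤ (1+e)^2+4 by nlinarith)
    rwa [Real.sqrt_sq (by norm_num)] at this
  unfold xi; linarith

lemma xi_pos {e : ℝ} (he : 0 ≤ e) : 0 < xi e := lt_of_lt_of_le (by norm_num) (xi_ge he)
lemma xi_gt_one {e : ℝ} (he : 0 ≤ e) : 1 < xi e := lt_of_lt_of_le (by norm_num) (xi_ge he)

lemma xi_sub_inv {e : ℝ} (he : 0 ≤ e) : xi e - (xi e)⁻¹ = 1 + e := by
  have h0 : xi e ≠ 0 := ne_of_gt (xi_pos he)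
  have hs := xi_sq (e := e)
  field_simp
  linear_combination hs


-- strictly decreasing g
lemma g_strictAnti {α γ : ℝ} (hα0 : 0 < α) (hα1 : α < 1) (hγ0 : 0 < γ) (hγ1 : γ < 1) :
    ∀ {s t : ℝ}, s < t → α ^ t + γ ^ t < α ^ s + γ ^ s := by
  intro s t hst
  exact add_lt_add (Real.rpow_lt_rpow_of_exponent_gt hα0 hα1 hst)
    (Real.rpow_lt_rpow_of_exponent_gt hγ0 hγ1 hst)

lemma g_continuous {α γ : ℝ} (hα0 : 0 < α) (hγ0 : 0 < γ) :
    Continuous (fun t : ℝ => α ^ t + γ ^ t) := by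
  have h1 : Continuous (fun t : ℝ => α ^ t) :=
    continuous_iff_continuousAt.mpr fun x => Real.continuousAt_const_rpow (ne_of_gt hα0)
  have h2 : Continuous (fun t : ℝ => γ ^ t) :=
    continuous_iff_continuousAt.mpr fun x => Real.continuousAt_const_rpow (ne_of_gt hγ0)
  exact h1.add h2

lemma g_root {α γ : ℝ} (hα0 : 0 < α) (hα1 : α < 1) (hγ0 : 0 < γ) (hγα : γ ≤ α) :
    ∃ t : ℝ, 0 < t ∧ α ^ t + γ ^ t = 1 := by
  have hγ1 : γ < 1 := lt_of_le_of_lt hγα hα1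
  set T : ℝ := Real.log 3 / (-Real.log α) with hT
  have hlogα : Real.log α < 0 := Real.log_neg hα0 hα1
  have hne : Real.log α ≠ 0 := ne_of_lt hlogα
  have hT0 : 0 < T := div_pos (Real.log_pos (by norm_num)) (by linarith)
  have hαT : α ^ T = 1/3 := by
    rw [Real.rpow_def_of_pos hα0]
    have h2 : Real.log α * T = -Real.log 3 := by
      rw [hT]
      field_simp
    rw [h2, Real.exp_neg, Real.exp_log (by norm_num : (0:ℝ) < 3)]
    norm_num
  have hγT : γ ^ T ≤ α ^ T := Real.rpow_le_rpow hγ0.le hγα hT0.le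
  have hgT : α ^ T + γ ^ T ≤ 2/3 := by rw [hαT] at *; linarith
  have hg0 : α ^ (0:ℝ) + γ ^ (0:ℝ) = 2 := by
    rw [Real.rpow_zero, Real.rpow_zero]; norm_num
  have hcont : ContinuousOn (fun t : ℝ => α ^ t + γ ^ t) (Set.Icc 0 T) :=
    (g_continuous hα0 hγ0).continuousOn
  have hmem : (1:ℝ) ∈ Set.Icc (α^T + γ^T) (α^(0:ℝ) + γ^(0:ℝ)) := by
    constructor
    · exact le_trans hgT (by norm_num)
    · rw [hg0]; norm_num
  obtain ⟨t, ht, hgt⟩ := intermediate_value_Icc' hT0.le hcont hmem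
  change α ^ t + γ ^ t = 1 at hgt
  refine ⟨t, ?_, hgt⟩
  rcases lt_or_ge 0 t with h | h
  · exact h
  exfalso
  rcases eq_or_lt_of_le h with h0 | h0
  · rw [h0, hg0] at hgt; norm_num at hgt
  · have h3 := g_strictAnti hα0 hα1 hγ0 hγ1 h0
    rw [hg0, hgt] at h3; norm_num at h3

/-- Root package for the equation a^t = b^t + c^t. -/
lemma root_package {a b c : ℝ} (hc : 0 < c) (hcb : c ≤ b) (hba : b < a) :
    ∃ t : ℝ, (0 < t ∧ a ^ t = b ^ t + c ^ t) ∧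
      (∀ s : ℝ, a ^ s = b ^ s + c ^ s → s = t) ∧
      (∀ s : ℝ, a ^ s ≤ b ^ s + c ^ s → s ≤ t) ∧
      (∀ s : ℝ, b ^ s + c ^ s < a ^ s → t < s) := by
  have hb : 0 < b := lt_of_lt_of_le hc hcb
  have ha : 0 < a := lt_trans hb hba
  set α := b/a with hα
  set γ := c/a with hγ
  have hα0 : 0 < α := div_pos hb ha
  have hα1 : α < 1 := (div_lt_one ha).mpr hba
  have hγ0 : 0 < γ := div_pos hc ha
  have hγα : γ ≤ α := by
    rw [hα, hγ]; gcongr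
  have hγ1 : γ < 1 := lt_of_le_of_lt hγα hα1
  have hanti : ∀ {s t : ℝ}, s < t → α ^ t + γ ^ t < α ^ s + γ ^ s :=
    g_strictAnti hα0 hα1 hγ0 hγ1
  have hkey : ∀ s : ℝ, α^s + γ^s = (b^s + c^s)/a^s := by
    intro s
    rw [hα, hγ, Real.div_rpow hb.le ha.le, Real.div_rpow hc.le ha.le]
    ring
  have has : ∀ s : ℝ, (0:ℝ) < a ^ s := fun s => Real.rpow_pos_of_pos ha s
  have hiff : ∀ s : ℝ, (α^s + γ^s = 1 ↔ a^s = b^s + c^s) := by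
    intro s
    rw [hkey s, div_eq_one_iff_eq (ne_of_gt (has s)), eq_comm]
  have hiff_le : ∀ s : ℝ, (1 ≤ α^s + γ^s ↔ a^s ≤ b^s + c^s) := by
    intro s
    rw [hkey s, one_le_div (has s)]
  have hiff_lt : ∀ s : ℝ, (α^s + γ^s < 1 ↔ b^s + c^s < a^s) := by
    intro s
    rw [hkey s, div_lt_one (has s)]
  obtain ⟨t, ht0, htr⟩ := g_root hα0 hα1 hγ0 hγα
  refine ⟨t, ⟨ht0, (hiff t).mp htr⟩, ?_, ?_, ?_⟩
  · intro s hs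
    have h2 : α^s + γ^s = 1 := (hiff s).mpr hs
    by_contra hne
    rcases lt_or_gt_of_ne hne with h | h
    · have h3 := hanti h; rw [htr, h2] at h3; exact lt_irrefl _ h3
    · have h3 := hanti h; rw [htr, h2] at h3; exact lt_irrefl _ h3
  · intro s hs
    have h2 : 1 ≤ α^s + γ^s := (hiff_le s).mpr hs
    by_contra hne
    push_neg at hne
    have h3 := hanti hne
    rw [htr] at h3
    linarith
  · intro s hs
    have h2 : α^s + γ^s < 1 := (hiff_lt s).mpr hs
    by_contra hne
    push_neg at hne
    have h3 : (1:ℝ) ≤ α^s + γ^s := by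
      rcases eq_or_lt_of_le hne with heq | hlt
      · rw [heq, htr]
      · have h4 := hanti hlt; rw [htr] at h4; linarith
    linarith

/-- Odd-case step. -/
lemma odd_step {P Q r u : ℝ} (hP : 0 < P) (hQ : 0 < Q) (hr : 0 < r) (hu : 0 < u)
    (heq : Q^u = (P*r)^u + P^u) (hlt : Q < r*r*P) :
    Q^u + (P*r)^u < (Q*r)^u := by
  have hPu : (0:ℝ) < P^u := Real.rpow_pos_of_pos hP u
  set x := r^u with hx
  have hx0 : 0 < x := Real.rpow_pos_of_pos hr u
  have hPr : (P*r)^u = P^u * x := by rw [Real.mul_rpow hP.le hr.le]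
  have hQP : (Q/P)^u = Q^u / P^u := Real.div_rpow hQ.le hP.le u
  have hA : (Q/P)^u = x + 1 := by
    rw [hQP, heq, hPr]; field_simp
  have hAlt : (Q/P)^u < x*x := by
    have h1 : Q/P < r*r := (div_lt_iff₀ hP).mpr (by linarith [hlt])
    have h2 : (Q/P)^u < (r*r)^u := Real.rpow_lt_rpow (by positivity) h1 hu
    rwa [Real.mul_rpow hr.le hr.le, ← hx] at h2
  have hx1 : x + 1 < x*x := by rw [← hA]; exact hAlt
  have hQr : (Q*r)^u = Q^u * x := by rw [Real.mul_rpow hQ.le hr.le]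
  have hQu : Q^u = P^u * (x+1) := by rw [heq, hPr]; ring
  rw [hQr, hQu, hPr]
  nlinarith [hPu, hx0]

/-- Even-case step. -/
lemma even_step {F1 F3 F5 r u : ℝ} (hF1 : 0 < F1) (hF13 : F1 < F3) (hr1 : 1 < r)
    (hu1 : 1 ≤ u)
    (heq : (F3*r)^u = F3^u + (F1*r)^u)
    (hCat : F5 * F1 = F3*F3 + 1)
    (hKey : Real.log r * Real.log (xi (1/(F3*F3)) / (xi (1/(F3*F3)) - 1))
        < Real.log (F3/F1) * Real.log (xi (1/(F3*F3)))) :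
    (F3*r)^u + F3^u < F5^u := by
  have hF3 : 0 < F3 := lt_trans hF1 hF13
  have hr0 : 0 < r := lt_trans one_pos hr1
  have hu0 : 0 < u := lt_of_lt_of_le one_pos hu1
  set e := 1/(F3*F3) with he
  have he0 : 0 < e := by rw [he]; positivity
  set ξ := xi e with hξdef
  have hξ1 : 1 < ξ := xi_gt_one he0.le
  have hξ0 : 0 < ξ := lt_trans one_pos hξ1
  set B := F3/F1 with hB
  have hB1 : 1 < B := (one_lt_div hF1).mpr hF13
  have hB0 : 0 < B := lt_trans one_pos hB1
  set x := r^u with hx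
  have hx0 : 0 < x := Real.rpow_pos_of_pos hr0 u
  have hF3u : (0:ℝ) < F3^u := Real.rpow_pos_of_pos hF3 u
  have hF1u : (0:ℝ) < F1^u := Real.rpow_pos_of_pos hF1 u
  have hBu : (0:ℝ) < B^u := Real.rpow_pos_of_pos hB0 u
  have h1 : (F3*r)^u = F3^u * x := by rw [Real.mul_rpow hF3.le hr0.le]
  have h2 : (F1*r)^u = F1^u * x := by rw [Real.mul_rpow hF1.le hr0.le]
  have h3 : B^u = F3^u/F1^u := by rw [hB, Real.div_rpow hF3.le hF1.le]
  have hF31u : F1^u < F3^u := Real.rpow_lt_rpow hF1.le hF13 hu0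
  have heq2 : F3^u * x = F3^u + F1^u * x := by rw [← h1, ← h2]; exact heq
  have hx1 : 1 < x := by
    by_contra hc
    push_neg at hc
    nlinarith [heq2, hF3u, hF1u, hx0]
  have hx10 : x - 1 ≠ 0 := by intro h; rw [sub_eq_zero] at h; exact (lt_irrefl _ (h ▸ hx1))
  have hBux : B^u = x/(x-1) := by
    rw [h3, div_eq_div_iff (ne_of_gt hF1u) hx10]
    linear_combination heq2
  have hxξ : x < ξ := by
    by_contra hcon
    push_neg at hcon
    have hlogr : 0 < Real.log r := Real.log_pos hr1
    have hlogB : 0 < Real.log B := Real.log_pos hB1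
    have hlogx : Real.log ξ ≤ Real.log x := Real.log_le_log hξ0 hcon
    have hux : Real.log x = u * Real.log r := by rw [hx]; exact Real.log_rpow hr0 u
    have hKey' : Real.log (ξ/(ξ-1)) * Real.log r < Real.log B * Real.log ξ := by
      rw [mul_comm]; exact hKey
    have d2 : Real.log B * Real.log ξ ≤ Real.log B * (u * Real.log r) := by
      apply mul_le_mul_of_nonneg_left _ hlogB.le
      rw [← hux]; exact hlogx
    have d3 : Real.log (ξ/(ξ-1)) * Real.log r < (Real.log B * u) * Real.log r := by
      calc Real.log (ξ/(ξ-1)) * Real.log r < Real.log B * Real.log ξ := hKey'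
        _ ≤ Real.log B * (u * Real.log r) := d2
        _ = (Real.log B * u) * Real.log r := by ring
    have h5 : Real.log (ξ/(ξ-1)) < Real.log B * u := lt_of_mul_lt_mul_right d3 hlogr.le
    have hfrac0 : (0:ℝ) < ξ/(ξ-1) := div_pos hξ0 (by linarith)
    have hBgt : ξ/(ξ-1) < B^u := by
      rw [Real.rpow_def_of_pos hB0]
      rw [← Real.exp_log hfrac0]
      exact Real.exp_lt_exp.mpr h5
    have hle : x/(x-1) ≤ ξ/(ξ-1) := by
      rw [div_le_div_iff₀ (by linarith) (by linarith)]
      nlinarith [hcon]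
    rw [hBux] at hBgt
    linarith
  have hxinv : x - x⁻¹ < 1 + e := by
    have hξinv : ξ - ξ⁻¹ = 1 + e := xi_sub_inv he0.le
    have hinv : ξ⁻¹ < x⁻¹ := by
      apply inv_strictAnti₀ hx0 hxξ
    linarith
  have hee : (1+e) ≤ (1+e)^u := by
    have h := Real.rpow_le_rpow_of_exponent_le (by linarith : (1:ℝ) ≤ 1+e) hu1
    rwa [Real.rpow_one] at h
  have hfin : x + 1 < B^u * (1+e)^u := by
    have hstep : x - x⁻¹ < (1+e)^u := lt_of_lt_of_le hxinv hee
    have hpos : 0 < x/(x-1) := div_pos hx0 (by rcases (sub_ne_zero.mp hx10).lt_or_gt with h|h <;> [linarith; linarith])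
    calc x + 1 = (x/(x-1)) * (x - x⁻¹) := by
          field_simp
          ring
      _ < (x/(x-1)) * (1+e)^u := mul_lt_mul_of_pos_left hstep hpos
      _ = B^u * (1+e)^u := by rw [hBux]
  have hF5eq : F5 = B * (1+e) * F3 := by
    rw [hB, he]
    field_simp
    linear_combination hCat
  have hF5u : F5^u = B^u * ((1+e)^u * F3^u) := by
    rw [hF5eq, Real.mul_rpow (by positivity) hF3.le, Real.mul_rpow (by positivity) (by linarith : (0:ℝ) ≤ 1+e)]
    ring
  rw [h1, hF5u]
  calc F3^u * x + F3^u = (x+1) * F3^u := by ring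
    _ < (B^u*(1+e)^u) * F3^u := mul_lt_mul_of_pos_right hfin hF3u
    _ = B^u * ((1+e)^u * F3^u) := by ring

lemma phiR_inv : phiR⁻¹ = phiR - 1 := by
  rw [inv_eq_one_div, eq_comm, eq_div_iff (ne_of_gt phiR_pos)]
  nlinarith [phiR_sq]

lemma log_phiR_lb : 0.38195 ≤ Real.log phiR := by
  have h := log_ge_one_sub_inv phiR_pos
  rw [phiR_inv] at h
  nlinarith [phiR_ub]

lemma log_phiR_pos : 0 < Real.log phiR := lt_of_lt_of_le (by norm_num) log_phiR_lb

section keyhelpers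

lemma xi_lb_abs {e z : ℝ} (he0 : 0 < e) (he : e ≤ 0.04)
    (hsq : z^2 = (1+e)*z+1) (h15 : 1.5 ≤ z) : phiR + 0.7*e ≤ z := by
  by_contra hcon
  push_neg at hcon
  have hfac : (phiR+0.7*e-z)*((phiR+0.7*e)+z-(1+e)) =
      (phiR+0.7*e)^2 - (1+e)*(phiR+0.7*e) - 1 := by
    linear_combination -hsq
  have hq : (phiR+0.7*e)^2 - (1+e)*(phiR+0.7*e) - 1 < 0 := by
    nlinarith [phiR_sq, phiR_ub, phiR_lb]
  have hsecond : 0 < (phiR+0.7*e)+z-(1+e) := by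
    nlinarith [phiR_lb]
  nlinarith

lemma xi_ub_abs {e z : ℝ} (he0 : 0 < e) (he : e ≤ 0.04)
    (hsq : z^2 = (1+e)*z+1) (h15 : 1.5 ≤ z) : z ≤ phiR + 0.73*e := by
  by_contra hcon
  push_neg at hcon
  have hfac : (phiR+0.73*e-z)*((phiR+0.73*e)+z-(1+e)) =
      (phiR+0.73*e)^2 - (1+e)*(phiR+0.73*e) - 1 := by
    linear_combination -hsq
  have hq : 0 < (phiR+0.73*e)^2 - (1+e)*(phiR+0.73*e) - 1 := by
    nlinarith [phiR_sq, phiR_ub, phiR_lb]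
  have hsecond : 0 < (phiR+0.73*e)+z-(1+e) := by
    nlinarith [phiR_lb]
  nlinarith

lemma gamma_bounds {e y : ℝ} (he0 : 0 < e) (he : e ≤ 0.04)
    (hylb : 0.4326*e ≤ y) (hyub : y ≤ 0.4512*e) :
    0.4247*e ≤ Real.log (1+y) ∧ Real.log (1+y) ≤ 0.4512*e := by
  have hy0 : 0 ≤ y := le_trans (by nlinarith) hylb
  constructor
  · have h1 := log_one_add_ge hy0
    nlinarith
  · have h1 := log_one_add_le hy0
    linarith

lemma tau_bound {e w : ℝ} (he0 : 0 < e) (he : e ≤ 0.04)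
    (hw : 1+0.68*e ≤ w) : 0.6615*e ≤ Real.log w := by
  have h1 : Real.log (1+0.68*e) ≤ Real.log w :=
    Real.log_le_log (by nlinarith) hw
  have h2 := log_one_add_ge (show (0:ℝ) ≤ 0.68*e by nlinarith)
  nlinarith

lemma tau_arg_bound {e z : ℝ} (he0 : 0 < e) (he : e ≤ 0.04)
    (hzlb : phiR + 0.7*e ≤ z) (hz0 : 0 < z) :
    1 + 0.68*e ≤ phiR^2*(z-1)/z := by
  rw [le_div_iff₀ hz0]
  nlinarith [phiR_sq, phiR_lb, phiR_ub]

lemma final_assembly {e Lphi β γ τ : ℝ} (he0 : 0 < e) (he : e ≤ 0.04)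
    (hL : 0.38195 ≤ Lphi) (hβ0 : 0 ≤ β) (hβ : β ≤ 1.2363*e)
    (hγlb : 0.4247*e ≤ γ) (hγub : γ ≤ 0.4512*e) (hτ : 0.6615*e ≤ τ) :
    Lphi*(2*Lphi-τ) < (2*Lphi-β)*(Lphi+γ) := by
  have hγ0 : 0 ≤ γ := le_trans (by nlinarith) hγlb
  have hsum : 0.2746*e ≤ 2*γ + τ - β := by linarith
  have h1 : 0.38195*(0.2746*e) ≤ Lphi*(2*γ+τ-β) :=
    mul_le_mul hL hsum (by nlinarith) (by linarith)
  have h2 : β*γ ≤ (1.2363*e)*(0.4512*e) :=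
    mul_le_mul hβ hγub hγ0 (by nlinarith)
  have h3 : (1.2363*e)*(0.4512*e) ≤ 0.0224*e := by nlinarith
  nlinarith [h1, h2, h3, he0]

end keyhelpers

lemma inv_sq_le_004 {F3 : ℝ} (h5 : 5 ≤ F3) : 1/(F3*F3) ≤ 0.04 := by
  rw [div_le_iff₀ (by nlinarith)]
  nlinarith

lemma phiR_pow_ge {m : ℕ} (hm3 : 3 ≤ m) : 4.236 ≤ phiR^m := by
  have h1 : phiR^3 ≤ phiR^m := pow_le_pow_right₀ (le_of_lt one_lt_phiR) hm3
  nlinarith [phiR_lb, phiR_sq]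

lemma g_sq_le {g : ℝ} (hg0 : 0 < g) (hg : g ≤ 0.2361) : g^2 ≤ 0.0558 := by nlinarith

lemma gF1_bound {g F1 : ℝ} (hg0 : 0 < g) (hF1 : 0 < F1) (hg2 : g^2 ≤ 0.0558)
    (hsq : g * (Real.sqrt 5 * F1) = 1 + g^2) : g * F1 ≤ 0.4722 := by
  have hx : 0 ≤ g*F1 := (mul_pos hg0 hF1).le
  have h1 : (g*F1)*2.2360 ≤ (g*F1)*Real.sqrt 5 := mul_le_mul_of_nonneg_left sqrt5_lb hx
  have h2 : (g*F1)*Real.sqrt 5 = 1 + g^2 := by linear_combination hsq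
  nlinarith

lemma gF3_bound {g F1 F3 : ℝ} (hg0 : 0 < g) (hF1 : 0 < F1) (hgF1 : g*F1 ≤ 0.4722)
    (heq : phiR^2*F1 = F3 + g) : g*F3 ≤ 1.2363 := by
  have h1 : g*F3 = phiR^2*(g*F1) - g^2 := by linear_combination (-g)*heq
  nlinarith [phiR_ub, phiR_lb, mul_pos hg0 hF1, phiR_sq, hg0]

lemma y_lb_abs {e z : ℝ} (he0 : 0 < e) (hzlb : phiR + 0.7*e ≤ z) :
    0.4326*e ≤ (z-phiR)/phiR := by
  rw [le_div_iff₀ phiR_pos]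
  nlinarith [phiR_ub]

lemma y_ub_abs {e z : ℝ} (he0 : 0 < e) (hzub : z ≤ phiR + 0.73*e) :
    (z-phiR)/phiR ≤ 0.4512*e := by
  rw [div_le_iff₀ phiR_pos]
  nlinarith [phiR_lb]


set_option maxHeartbeats 1000000 in
/-- The key analytic inequality, general case `m ≥ 3` odd. -/
lemma key_even_general {m : ℕ} (hm : Odd m) (hm3 : 3 ≤ m) :
    Real.log phiR * Real.log
        (xi (1/((Nat.fib (m+2):ℝ) * (Nat.fib (m+2):ℝ))) /
          (xi (1/((Nat.fib (m+2):ℝ) * (Nat.fib (m+2):ℝ))) - 1))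
      < Real.log ((Nat.fib (m+2):ℝ)/(Nat.fib m:ℝ)) *
          Real.log (xi (1/((Nat.fib (m+2):ℝ) * (Nat.fib (m+2):ℝ)))) := by
  set F1 : ℝ := (Nat.fib m : ℝ) with hF1def
  set F3 : ℝ := (Nat.fib (m+2) : ℝ) with hF3def
  have hF1_2 : 2 ≤ F1 := by
    rw [hF1def]
    have : Nat.fib 3 ≤ Nat.fib m := Nat.fib_mono hm3
    exact_mod_cast this
  have hF3_5 : 5 ≤ F3 := by
    rw [hF3def]
    have : Nat.fib 5 ≤ Nat.fib (m+2) := Nat.fib_mono (by omega)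
    exact_mod_cast this
  have hF1_0 : 0 < F1 := by linarith
  have hF3_0 : 0 < F3 := by linarith
  have hF3_2F1 : 2*F1 ≤ F3 := by
    have h1 : F1 ≤ (Nat.fib (m+1) : ℝ) := by
      rw [hF1def]; exact_mod_cast Nat.fib_mono (Nat.le_succ m)
    have h2 : F3 = F1 + (Nat.fib (m+1) : ℝ) := by
      rw [hF1def, hF3def]
      exact_mod_cast congrArg (Nat.cast : ℕ → ℝ) (Nat.fib_add_two (n := m))
    linarith
  set e : ℝ := 1/(F3*F3) with hedef
  have he0 : 0 < e := by rw [hedef]; positivity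
  have he_ub : e ≤ 0.04 := by rw [hedef]; exact inv_sq_le_004 hF3_5
  set ξ : ℝ := xi e with hξdef
  have hξ1 : 1 < ξ := xi_gt_one he0.le
  have hξ0 : 0 < ξ := by linarith
  have hξsq : ξ^2 = (1+e)*ξ + 1 := xi_sq
  have hξ15 : 1.5 ≤ ξ := xi_ge he0.le
  have hφ0 : 0 < phiR := phiR_pos
  have hξ_lb : phiR + 0.7*e ≤ ξ := xi_lb_abs he0 he_ub hξsq hξ15
  have hξ_ub : ξ ≤ phiR + 0.73*e := xi_ub_abs he0 he_ub hξsq hξ15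
  -- Binet data
  set g : ℝ := (phiR^m)⁻¹ with hgdef
  have hφm0 : 0 < phiR^m := phiR_pow_pos m
  have hg0 : 0 < g := by rw [hgdef]; positivity
  have hgφm : g * phiR^m = 1 := by rw [hgdef]; field_simp
  have hφm_lb : 4.236 ≤ phiR^m := phiR_pow_ge hm3
  have hg_ub : g ≤ 0.2361 := by
    have h1 : g*4.236 ≤ g*phiR^m := mul_le_mul_of_nonneg_left hφm_lb hg0.le
    rw [hgφm] at h1
    linarith
  have hg2 : g^2 ≤ 0.0558 := g_sq_le hg0 hg_ub
  have hbin : Real.sqrt 5 * F1 = phiR^m + g := by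
    rw [hF1def, hgdef]; exact fib_odd_binet hm
  have hg_eq : phiR^2 * F1 = F3 + g := by
    rw [hF1def, hF3def, hgdef]; exact phi_sq_fib hm
  have hg_sq : g * (Real.sqrt 5 * F1) = 1 + g^2 := by
    rw [hbin, mul_add, hgφm]; ring
  have hgF1 : g * F1 ≤ 0.4722 := gF1_bound hg0 hF1_0 hg2 hg_sq
  have hgF3 : g * F3 ≤ 1.2363 := gF3_bound hg0 hF1_0 hgF1 hg_eq
  -- B
  set B : ℝ := F3/F1 with hBdef
  have hB2 : 2 ≤ B := by rw [hBdef, le_div_iff₀ hF1_0]; linarith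
  have hB0 : 0 < B := by linarith
  -- abbreviations for logs
  set Lφ : ℝ := Real.log phiR with hLφ
  set LB : ℝ := Real.log B with hLB
  set Lξ : ℝ := Real.log ξ with hLξ
  set Lfrac : ℝ := Real.log (ξ/(ξ-1)) with hLfrac
  set β : ℝ := 2*Lφ - LB with hβdef
  set γ : ℝ := Lξ - Lφ with hγdef
  set τ : ℝ := 2*Lφ - Lfrac with hτdef
  have hLφ_lb : 0.38195 ≤ Lφ := log_phiR_lb
  -- beta bounds
  have hβ_expr : β = Real.log (1 + g/F3) := by
    have h1 : (1:ℝ) + g/F3 = phiR^2/B := by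
      rw [hBdef]
      field_simp
      linear_combination -hg_eq
    rw [hβdef, h1, Real.log_div (by positivity) (ne_of_gt hB0), hLB, hLφ, Real.log_pow]
    push_cast
    ring
  have hβ_nonneg : 0 ≤ β := by
    rw [hβ_expr]
    apply Real.log_nonneg
    have : 0 ≤ g/F3 := by positivity
    linarith
  have hβ_ub : β ≤ 1.2363*e := by
    have h2 : (1:ℝ) + g/F3 = 1 + (g*F3)*e := by rw [hedef]; field_simp
    rw [hβ_expr, h2]
    have hge : (0:ℝ) ≤ (g*F3)*e := mul_nonneg (mul_nonneg hg0.le hF3_0.le) he0.le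
    have h1 : Real.log (1 + (g*F3)*e) ≤ (g*F3)*e := log_one_add_le hge
    have h3 : (g*F3)*e ≤ 1.2363*e := mul_le_mul_of_nonneg_right hgF3 he0.le
    linarith
  -- gamma bounds
  set y : ℝ := (ξ-phiR)/phiR with hydef
  have hξφ : ξ/phiR = 1 + y := by rw [hydef]; field_simp; ring
  have hγ_expr : γ = Real.log (1 + y) := by
    rw [← hξφ, hγdef, hLξ, hLφ, ← Real.log_div (ne_of_gt hξ0) (ne_of_gt hφ0)]
  have hy_lb : 0.4326*e ≤ y := by
    rw [hydef]; exact y_lb_abs he0 hξ_lb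
  have hy_ub : y ≤ 0.4512*e := by
    rw [hydef]; exact y_ub_abs he0 hξ_ub
  have hγb := gamma_bounds he0 he_ub hy_lb hy_ub
  have hγ_lb : 0.4247*e ≤ γ := by rw [hγ_expr]; exact hγb.1
  have hγ_ub : γ ≤ 0.4512*e := by rw [hγ_expr]; exact hγb.2
  -- tau bound
  have hτ_expr : τ = Real.log (phiR^2*(ξ-1)/ξ) := by
    rw [Real.log_div (ne_of_gt (mul_pos (by positivity : (0:ℝ) < phiR^2) (by linarith : (0:ℝ) < ξ-1))) (ne_of_gt hξ0),
      Real.log_mul (by positivity : (phiR:ℝ)^2 ≠ 0) (sub_ne_zero_of_ne (ne_of_gt hξ1)), Real.log_pow,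
      hτdef, hLfrac, Real.log_div (ne_of_gt hξ0) (sub_ne_zero_of_ne (ne_of_gt hξ1)), hLφ]
    push_cast
    ring
  have hτ_lb : 0.6615*e ≤ τ := by
    rw [hτ_expr]
    exact tau_bound he0 he_ub (tau_arg_bound he0 he_ub hξ_lb hξ0)
  -- final assembly
  have hgoal := final_assembly he0 he_ub hLφ_lb hβ_nonneg hβ_ub hγ_lb hγ_ub hτ_lb
  have hrw1 : LB = 2*Lφ - β := by rw [hβdef]; ring
  have hrw2 : Lξ = Lφ + γ := by rw [hγdef]; ring
  have hrw3 : Lfrac = 2*Lφ - τ := by rw [hτdef]; ring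
  calc Lφ * Lfrac = Lφ*(2*Lφ-τ) := by rw [hrw3]
    _ < (2*Lφ-β)*(Lφ+γ) := hgoal
    _ = LB * Lξ := by rw [hrw1, hrw2]

lemma quad_lt_root {c z L : ℝ} (hsq : z^2 = c*z + 1) (hpos : 0 < L + z - c)
    (hq : L^2 - c*L - 1 < 0) : L < z := by
  have hfac : (L-z)*(L+z-c) = L^2 - c*L - 1 := by linear_combination -hsq
  nlinarith

lemma quad_gt_root {c z U : ℝ} (hsq : z^2 = c*z + 1) (hpos : 0 < U + z - c)
    (hq : 0 < U^2 - c*U - 1) : z < U := by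
  have hfac : (U-z)*(U+z-c) = U^2 - c*U - 1 := by linear_combination -hsq
  nlinarith

lemma log_phiR_ub : Real.log phiR ≤ 0.482 := by
  have hsum := Real.sum_le_exp_of_nonneg (by norm_num : (0:ℝ) ≤ 0.482) 5
  have hval : (1.619:ℝ) ≤ ∑ i ∈ Finset.range 5, (0.482:ℝ)^i/(Nat.factorial i) := by
    simp [Finset.sum_range_succ, Nat.factorial]
    norm_num
  rw [Real.log_le_iff_le_exp phiR_pos]
  calc phiR ≤ 1.61805 := phiR_ub
    _ ≤ 1.619 := by norm_num
    _ ≤ ∑ i ∈ Finset.range 5, (0.482:ℝ)^i/(Nat.factorial i) := hval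
    _ ≤ Real.exp 0.482 := hsum

/-- The key analytic inequality for m = 1 (i.e. n = 4). -/
lemma key_even_m1 :
    Real.log phiR * Real.log
        (xi (1/((Nat.fib 3:ℝ) * (Nat.fib 3:ℝ))) /
          (xi (1/((Nat.fib 3:ℝ) * (Nat.fib 3:ℝ))) - 1))
      < Real.log ((Nat.fib 3:ℝ)/(Nat.fib 1:ℝ)) *
          Real.log (xi (1/((Nat.fib 3:ℝ) * (Nat.fib 3:ℝ)))) := by
  have hf3 : (Nat.fib 3 : ℝ) = 2 := by norm_num [Nat.fib]
  have hf1 : (Nat.fib 1 : ℝ) = 1 := by norm_num [Nat.fib]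
  rw [hf3, hf1]
  have he : (1:ℝ)/((2:ℝ)*2) = 0.25 := by norm_num
  rw [he]
  set ξ : ℝ := xi 0.25 with hξdef
  have hξsq : ξ^2 = 1.25*ξ + 1 := by
    have := xi_sq (e := 0.25)
    rw [← hξdef] at this
    norm_num at this ⊢
    linarith [this]
  have hξ15 : 1.5 ≤ ξ := xi_ge (by norm_num)
  have hξ_lb : (1.8042:ℝ) ≤ ξ := le_of_lt <| quad_lt_root hξsq (by norm_num; linarith) (by norm_num)
  have hξ_ub : ξ ≤ 1.8043 := le_of_lt <| quad_gt_root hξsq (by norm_num; linarith) (by norm_num)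
  have hξ1 : (1:ℝ) < ξ := by linarith
  -- bounds on logs
  have hlog2_lb : (0.6931471:ℝ) ≤ Real.log 2 := by linarith [Real.log_two_gt_d9]
  have hlog2_ub : Real.log 2 ≤ 0.6931472 := by linarith [Real.log_two_lt_d9]
  have hlogξ_lb : (0.5846:ℝ) ≤ Real.log ξ := by
    have h1 : Real.log (2*0.9021) ≤ Real.log ξ :=
      Real.log_le_log (by norm_num) (by linarith)
    rw [Real.log_mul (by norm_num) (by norm_num)] at h1
    have h2 : (1:ℝ) - (0.9021:ℝ)⁻¹ ≤ Real.log 0.9021 := log_ge_one_sub_inv (by norm_num)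
    have h3 : (0.9021:ℝ)⁻¹ ≤ 1.1085246 := by norm_num
    linarith
  have hfrac_ub : ξ/(ξ-1) ≤ 2.24366 := by
    rw [div_le_iff₀ (by linarith)]
    linarith
  have hfrac_pos : (0:ℝ) < ξ/(ξ-1) := div_pos (by linarith) (by linarith)
  have hlogfrac_ub : Real.log (ξ/(ξ-1)) ≤ 0.81498 := by
    have h1 : Real.log (ξ/(ξ-1)) ≤ Real.log 2.24366 :=
      Real.log_le_log hfrac_pos hfrac_ub
    have h2 : Real.log 2.24366 = Real.log 2 + Real.log 1.12183 := by
      rw [← Real.log_mul (by norm_num) (by norm_num)]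
      norm_num
    have h3 : Real.log 1.12183 ≤ 0.12183 := by
      have := log_one_add_le (show (0:ℝ) ≤ 0.12183 by norm_num)
      norm_num at this
      linarith
    linarith
  have hlogfrac_nonneg : (0:ℝ) ≤ Real.log (ξ/(ξ-1)) := by
    apply Real.log_nonneg
    rw [le_div_iff₀ (by linarith)]
    linarith
  have hlogφ_nonneg : (0:ℝ) ≤ Real.log phiR := log_phiR_pos.le
  have h2eq : ((2:ℝ)/1) = 2 := by norm_num
  rw [h2eq]
  calc Real.log phiR * Real.log (ξ/(ξ-1))
      ≤ 0.482 * 0.81498 := mul_le_mul log_phiR_ub hlogfrac_ub hlogfrac_nonneg (by norm_num)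
    _ < 0.6931471 * 0.5846 := by norm_num
    _ ≤ Real.log 2 * Real.log ξ := mul_le_mul hlog2_lb hlogξ_lb (by norm_num) (by linarith [Real.log_two_gt_d9])


noncomputable def XI (n : ℕ) : ℝ := xi (1/((Nat.fib (n-1):ℝ) * (Nat.fib (n-1):ℝ)))

def CondR (N : ℕ) (r : ℝ) : Prop :=
  1 < r ∧
  (∀ k ∈ Finset.range (N+2),
    (Odd k → (Nat.fib (k-1) : ℝ) * r < Nat.fib k) ∧
    (Even k → 2 ≤ k → (Nat.fib k : ℝ) < (Nat.fib (k-1):ℝ) * r)) ∧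
  (∀ n ∈ Finset.range (N+1), 3 ≤ n →
    (Odd n → (Nat.fib n : ℝ) < r*r*(Nat.fib (n-2):ℝ)) ∧
    (Even n → Real.log r * Real.log (XI n / (XI n - 1))
      < Real.log ((Nat.fib (n-1):ℝ)/(Nat.fib (n-3):ℝ)) * Real.log (XI n)))

lemma fib_cast_pos {k : ℕ} (hk : 1 ≤ k) : (0:ℝ) < (Nat.fib k : ℝ) := by
  have := Nat.fib_pos.mpr hk
  exact_mod_cast this

lemma val_odd {k : ℕ} (hk : Odd k) : (Nat.fib (k-1) : ℝ) * phiR < Nat.fib k := by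
  have hk1 : 1 ≤ k := hk.pos
  have he : Even (k-1) := by
    rcases hk with ⟨j, rfl⟩; simpa using even_two_mul j
  have h := phi_fib_lt he
  rw [Nat.sub_add_cancel hk1] at h
  linarith [h]

lemma val_even {k : ℕ} (hk : Even k) (hk2 : 2 ≤ k) :
    (Nat.fib k : ℝ) < (Nat.fib (k-1):ℝ) * phiR := by
  have ho : Odd (k-1) := by
    rcases hk with ⟨j, rfl⟩
    have : j + j - 1 = 2*(j-1) + 1 := by omega
    rw [this]; exact odd_two_mul_add_one _
  have h := fib_lt_phi_fib ho
  rw [Nat.sub_add_cancel (by omega : 1 ≤ k)] at h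
  linarith [h]

lemma val_odd2 {n : ℕ} (hn : Odd n) (hn3 : 3 ≤ n) :
    (Nat.fib n : ℝ) < phiR*phiR*(Nat.fib (n-2):ℝ) := by
  have hm : Odd (n-2) := by
    rcases hn with ⟨j, rfl⟩
    have : 2*j+1-2 = 2*(j-1)+1 := by omega
    rw [this]; exact odd_two_mul_add_one _
  have h := phi_sq_fib hm
  rw [Nat.sub_add_cancel (by omega : 2 ≤ n)] at h
  have hg : (0:ℝ) < (phiR^(n-2))⁻¹ := inv_pos.mpr (phiR_pow_pos _)
  rw [← pow_two]
  linarith [h, hg]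

lemma val_even2 {n : ℕ} (hn : Even n) (hn3 : 3 ≤ n) :
    Real.log phiR * Real.log (XI n / (XI n - 1))
      < Real.log ((Nat.fib (n-1):ℝ)/(Nat.fib (n-3):ℝ)) * Real.log (XI n) := by
  have hn4 : 4 ≤ n := by
    rcases hn with ⟨j, rfl⟩; omega
  obtain ⟨m, rfl⟩ : ∃ m, n = m + 3 := ⟨n - 3, by omega⟩
  have h1 : m + 3 - 1 = m + 2 := by omega
  have h3 : m + 3 - 3 = m := by omega
  have hm : Odd m := by
    rcases hn with ⟨j, hj⟩
    exact ⟨j - 2, by omega⟩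
  unfold XI
  rw [h1, h3]
  rcases eq_or_lt_of_le (show 1 ≤ m from hm.pos) with h | h
  · -- m = 1
    rw [← h]
    exact key_even_m1
  · have hm3 : 3 ≤ m := by
      rcases hm with ⟨j, rfl⟩; omega
    exact key_even_general hm hm3

lemma condR_eventually (N : ℕ) : ∀ᶠ r in nhds phiR, CondR N r := by
  have hφpos := phiR_pos
  refine Filter.Eventually.and ?_ (Filter.Eventually.and ?_ ?_)
  · exact ContinuousAt.eventually_lt continuousAt_const continuousAt_id one_lt_phiR
  · rw [Filter.eventually_all_finset]
    intro k _
    refine Filter.Eventually.and ?_ ?_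
    · by_cases hk : Odd k
      · have hcont : ContinuousAt (fun r : ℝ => (Nat.fib (k-1) : ℝ) * r) phiR :=
          (continuous_const.mul continuous_id).continuousAt
        have h := ContinuousAt.eventually_lt hcont continuousAt_const (val_odd hk)
        exact h.mono (fun r hr _ => hr)
      · exact Filter.Eventually.of_forall (fun r h => absurd h hk)
    · by_cases hk : Even k ∧ 2 ≤ k
      · have hcont : ContinuousAt (fun r : ℝ => (Nat.fib (k-1) : ℝ) * r) phiR :=
          (continuous_const.mul continuous_id).continuousAt
        have h := ContinuousAt.eventually_lt continuousAt_const hcont (val_even hk.1 hk.2)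
        exact h.mono (fun r hr _ _ => hr)
      · refine Filter.Eventually.of_forall (fun r h1 h2 => absurd ⟨h1, h2⟩ hk)
  · rw [Filter.eventually_all_finset]
    intro n _
    by_cases hn3 : 3 ≤ n
    swap
    · exact Filter.Eventually.of_forall (fun r h => absurd h hn3)
    have : ∀ᶠ r in nhds phiR,
        ((Odd n → (Nat.fib n : ℝ) < r*r*(Nat.fib (n-2):ℝ)) ∧
        (Even n → Real.log r * Real.log (XI n / (XI n - 1))
          < Real.log ((Nat.fib (n-1):ℝ)/(Nat.fib (n-3):ℝ)) * Real.log (XI n))) := by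
      refine Filter.Eventually.and ?_ ?_
      · by_cases hn : Odd n
        · have hcont : ContinuousAt (fun r : ℝ => r*r*(Nat.fib (n-2):ℝ)) phiR := by
            exact ((continuous_id.mul continuous_id).mul continuous_const).continuousAt
          have h := ContinuousAt.eventually_lt continuousAt_const hcont (val_odd2 hn hn3)
          exact h.mono (fun r hr _ => hr)
        · exact Filter.Eventually.of_forall (fun r h => absurd h hn)
      · by_cases hn : Even n
        · have hcont : ContinuousAt (fun r : ℝ => Real.log r * Real.log (XI n / (XI n - 1))) phiR :=
            ((Real.continuousAt_log (ne_of_gt hφpos)).mul continuousAt_const)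
          have h := ContinuousAt.eventually_lt hcont continuousAt_const (val_even2 hn hn3)
          exact h.mono (fun r hr _ => hr)
        · exact Filter.Eventually.of_forall (fun r h => absurd h hn)
    exact this.mono (fun r hr _ => hr)


end AuxiliaryIW

/-- Theorem `IntersectionWeaving`: for every `N ≥ 3` there is `δ > 0` such that
every pair of primes `p, q` with `|log q / log p − φ| < δ` is compatible with `N`: condition (W)
holds, for each `3 ≤ n ≤ N+1` there is a unique positive `t_n(p,q)` solving the
Mahler-measure equation, and `t_{N+1} < t_N < ⋯ < t_4 < t_3`. -/
theorem stmt4 (N : ℕ) (hN : 3 ≤ N) :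
    ∃ δ : ℝ, 0 < δ ∧ ∀ p q : ℕ, p.Prime → q.Prime →
      |Real.log q / Real.log p - phiR| < δ →
      CondW N p q ∧ ∃ tt : ℕ → ℝ,
        (∀ n : ℕ, 3 ≤ n → n ≤ N + 1 →
          (0 < tt n ∧ peq p q n (tt n)) ∧ ∀ t' : ℝ, 0 < t' → peq p q n t' → t' = tt n) ∧
        (∀ n : ℕ, 3 ≤ n → n ≤ N → tt (n + 1) < tt n) := by
  obtain ⟨δ, hδ0, hδ⟩ := Metric.eventually_nhds_iff_ball.mp (condR_eventually N)
  refine ⟨δ, hδ0, fun p q hp hq hdist => ?_⟩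
  set r := Real.log q / Real.log p with hrdef
  have hC : CondR N r := hδ r (by rw [Metric.mem_ball, Real.dist_eq]; exact hdist)
  obtain ⟨hr1, hCond1, hCond2⟩ := hC
  have hp1 : (1:ℝ) < p := by exact_mod_cast hp.one_lt
  have hL : 0 < Real.log p := Real.log_pos hp1
  have hr0 : 0 < r := lt_trans one_pos hr1
  have hM : Real.log q = r * Real.log p := (div_mul_cancel₀ _ (ne_of_gt hL)).symm
  set c : ℕ → ℝ := fun k => if Odd k then (Nat.fib k : ℝ) else (Nat.fib (k-1):ℝ)*r with hcdef
  have hcodd : ∀ k, Odd k → c k = (Nat.fib k : ℝ) := fun k hk => if_pos hk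
  have hceven : ∀ k, Even k → c k = (Nat.fib (k-1):ℝ)*r := fun k hk =>
    if_neg (Nat.not_odd_iff_even.mpr hk)
  have hA : ∀ k, k ≤ N+1 → Odd k → (Nat.fib (k-1):ℝ)*r < Nat.fib k := fun k h2 hk =>
    (hCond1 k (Finset.mem_range.mpr (by omega))).1 hk
  have hB : ∀ k, 2 ≤ k → k ≤ N+1 → Even k → (Nat.fib k:ℝ) < (Nat.fib (k-1):ℝ)*r :=
    fun k h1 h2 hk => (hCond1 k (Finset.mem_range.mpr (by omega))).2 hk h1
  have hc_pos : ∀ k, 1 ≤ k → 0 < c k := by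
    intro k hk
    rcases Nat.even_or_odd k with he | ho
    · rw [hceven k he]
      have hk2 : 2 ≤ k := by rcases he with ⟨j, rfl⟩; omega
      exact mul_pos (fib_cast_pos (by omega)) hr0
    · rw [hcodd k ho]; exact fib_cast_pos hk
  have hr2 : r < 2 := by
    have h := hA 3 (by omega) ⟨1, rfl⟩
    have h2 : (Nat.fib 2 : ℝ) = 1 := by norm_num [Nat.fib]
    have h3 : (Nat.fib 3 : ℝ) = 2 := by norm_num [Nat.fib]
    rw [show (3:ℕ)-1 = 2 from rfl, h2, h3] at h
    linarith
  have hc_mono : ∀ k, 2 ≤ k → k ≤ N+1 → c (k-1) < c k := by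
    intro k h2 hN1
    rcases Nat.even_or_odd k with he | ho
    · have ho1 : Odd (k-1) := by rcases he with ⟨j, rfl⟩; exact ⟨j-1, by omega⟩
      rw [hceven k he, hcodd _ ho1]
      have hpos := fib_cast_pos (show 1 ≤ k-1 by omega)
      nlinarith
    · have he1 : Even (k-1) := by rcases ho with ⟨j, rfl⟩; exact ⟨j, by omega⟩
      have hk3 : 3 ≤ k := by rcases ho with ⟨j, rfl⟩; omega
      rw [hcodd k ho, hceven _ he1, show k-1-1 = k-2 by omega]
      have h2f : 2*(Nat.fib (k-2):ℝ) ≤ Nat.fib k := by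
        have hm : Nat.fib (k-2) + Nat.fib (k-2) ≤ Nat.fib (k-2) + Nat.fib (k-1) := by
          have := Nat.fib_mono (show k-2 ≤ k-1 by omega); omega
        have hrec : Nat.fib k = Nat.fib (k-2) + Nat.fib (k-1) := by
          have := Nat.fib_add_two (n := k-2)
          rw [show k-2+2 = k by omega, show k-2+1 = k-1 by omega] at this
          exact this
        have hm2 : ((Nat.fib (k-2):ℝ)) + (Nat.fib (k-2):ℝ) ≤ (Nat.fib (k-2):ℝ) + (Nat.fib (k-1):ℝ) := by
          exact_mod_cast hm
        rw [hrec]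
        push_cast
        linarith
      have hpos := fib_cast_pos (show 1 ≤ k-2 by omega)
      nlinarith
  have hroot : ∀ n, (3 ≤ n ∧ n ≤ N+1) → ∃ t : ℝ,
      (0 < t ∧ c n ^ t = c (n-1) ^ t + c (n-2) ^ t) ∧
      (∀ s : ℝ, c n ^ s = c (n-1) ^ s + c (n-2) ^ s → s = t) ∧
      (∀ s : ℝ, c n ^ s ≤ c (n-1) ^ s + c (n-2) ^ s → s ≤ t) ∧
      (∀ s : ℝ, c (n-1) ^ s + c (n-2) ^ s < c n ^ s → t < s) := by
    intro n ⟨h3, h1⟩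
    have e1 : c (n-2) < c (n-1) := by
      have := hc_mono (n-1) (by omega) (by omega)
      rwa [show n-1-1 = n-2 by omega] at this
    exact root_package (hc_pos (n-2) (by omega)) e1.le (hc_mono n (by omega) h1)
  choose! troot htroot using hroot
  -- mmax identification
  have hmmax : ∀ k, 1 ≤ k → k ≤ N+1 → mmax p q k = Real.log p * c k := by
    intro k h1 h2
    rcases Nat.even_or_odd k with he | ho
    · have hk2 : 2 ≤ k := by rcases he with ⟨j, rfl⟩; omega
      have hlt := hB k hk2 h2 he
      have : mmax p q k = (Nat.fib (k-1):ℝ) * Real.log q := by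
        apply max_eq_right
        rw [hM]
        nlinarith
      rw [this, hM, hceven k he]
      ring
    · have hlt := hA k h2 ho
      have : mmax p q k = (Nat.fib k:ℝ) * Real.log p := by
        apply max_eq_left
        rw [hM]
        nlinarith
      rw [this, hcodd k ho]
      ring
  have hpeq_iff : ∀ n, 3 ≤ n → n ≤ N+1 → ∀ t : ℝ,
      (peq p q n t ↔ c n ^ t = c (n-1) ^ t + c (n-2) ^ t) := by
    intro n h3 h1 t
    unfold peq
    rw [hmmax n (by omega) h1, hmmax (n-1) (by omega) (by omega),
      hmmax (n-2) (by omega) (by omega)]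
    rw [Real.mul_rpow hL.le (hc_pos n (by omega)).le,
      Real.mul_rpow hL.le (hc_pos (n-1) (by omega)).le,
      Real.mul_rpow hL.le (hc_pos (n-2) (by omega)).le]
    have hLt : (0:ℝ) < (Real.log p) ^ t := Real.rpow_pos_of_pos hL t
    constructor
    · intro h
      rw [← mul_add] at h
      exact mul_left_cancel₀ (ne_of_gt hLt) h
    · intro h
      rw [h]; ring
  constructor
  · -- CondW
    unfold CondW
    rw [← hrdef]
    have hfN1 := fib_cast_pos (show 1 ≤ N-1 by omega)
    have hfN2 := fib_cast_pos (show 1 ≤ N-2 by omega)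
    rcases Nat.even_or_odd N with he | ho
    · left
      constructor
      · rw [div_lt_iff₀ hfN1]
        have := hB N (by omega) (by omega) he
        linarith
      · rw [lt_div_iff₀ hfN2]
        have ho1 : Odd (N-1) := by rcases he with ⟨j, rfl⟩; exact ⟨j-1, by omega⟩
        have := hA (N-1) (by omega) ho1
        rw [show N-1-1 = N-2 by omega] at this
        linarith
    · right
      constructor
      · rw [div_lt_iff₀ hfN2]
        have he1 : Even (N-1) := by rcases ho with ⟨j, rfl⟩; exact ⟨j, by omega⟩
        have := hB (N-1) (by omega) (by omega) he1
        rw [show N-1-1 = N-2 by omega] at this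
        linarith
      · rw [lt_div_iff₀ hfN1]
        have := hA N (by omega) ho
        linarith
  refine ⟨troot, ?_, ?_⟩
  · intro n h3 h1
    obtain ⟨⟨ht0, hteq⟩, huniq, -, -⟩ := htroot n ⟨h3, h1⟩
    exact ⟨⟨ht0, (hpeq_iff n h3 h1 _).mpr hteq⟩,
      fun t' _ hpe => huniq t' ((hpeq_iff n h3 h1 _).mp hpe)⟩
  · intro n h3 hn
    obtain ⟨⟨hu0, hueq⟩, -, hule, -⟩ := htroot n ⟨h3, by omega⟩
    obtain ⟨-, -, -, h2lt⟩ := htroot (n+1) ⟨by omega, by omega⟩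
    have h2lt' := h2lt (troot n)
    rw [show n+1-1 = n by omega, show n+1-2 = n-1 by omega] at h2lt'
    apply h2lt'
    rcases Nat.even_or_odd n with he | ho
    · -- n even, use even_step
      have hn4 : 4 ≤ n := by rcases he with ⟨j, rfl⟩; omega
      have ho1 : Odd (n-1) := by rcases he with ⟨j, rfl⟩; exact ⟨j-1, by omega⟩
      have he2 : Even (n-2) := by rcases he with ⟨j, rfl⟩; exact ⟨j-1, by omega⟩
      have ho3 : Odd (n+1) := by rcases he with ⟨j, rfl⟩; exact ⟨j, by omega⟩
      have hon3 : Odd (n-3) := by rcases he with ⟨j, rfl⟩; exact ⟨j-2, by omega⟩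
      rw [hceven n he, hcodd (n-1) ho1, hceven (n-2) he2,
        show n-2-1 = n-3 by omega] at hueq
      rw [hceven n he, hcodd (n-1) ho1, hcodd (n+1) ho3]
      have hrec : (Nat.fib (n-1):ℝ) = Nat.fib (n-3) + Nat.fib (n-2) := by
        have := Nat.fib_add_two (n := n-3)
        rw [show n-3+2 = n-1 by omega, show n-3+1 = n-2 by omega] at this
        exact_mod_cast congrArg (Nat.cast : ℕ → ℝ) this
      have hu1 : 1 ≤ troot n := by
        apply hule
        rw [Real.rpow_one, Real.rpow_one, Real.rpow_one, hceven n he, hcodd (n-1) ho1,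
          hceven (n-2) he2, show n-2-1 = n-3 by omega]
        have h := hA (n-1) (by omega) ho1
        rw [show n-1-1 = n-2 by omega] at h
        have h5 : (Nat.fib (n-1):ℝ)*r = (Nat.fib (n-3):ℝ)*r + (Nat.fib (n-2):ℝ)*r := by
          rw [hrec]; ring
        linarith
      have hCat : (Nat.fib (n+1):ℝ) * Nat.fib (n-3) =
          (Nat.fib (n-1):ℝ)*(Nat.fib (n-1):ℝ) + 1 := by
        have h := fib_catalan2 (m := n-3) hon3
        rw [show n-3+4 = n+1 by omega, show n-3+2 = n-1 by omega, pow_two] at h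
        exact h
      have hkey := (hCond2 n (Finset.mem_range.mpr (by omega)) h3).2 he
      unfold XI at hkey
      have hF13 : (Nat.fib (n-3):ℝ) < Nat.fib (n-1) := by
        have := fib_cast_pos (show 1 ≤ n-2 by omega)
        linarith [hrec]
      exact even_step (fib_cast_pos (by omega)) hF13 hr1 hu1 hueq hCat hkey
    · -- n odd, use odd_step
      have he1 : Even (n-1) := by rcases ho with ⟨j, rfl⟩; exact ⟨j, by omega⟩
      have ho2 : Odd (n-2) := by rcases ho with ⟨j, rfl⟩; exact ⟨j-1, by omega⟩
      have he3 : Even (n+1) := by rcases ho with ⟨j, rfl⟩; exact ⟨j+1, by omega⟩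
      rw [hcodd n ho, hceven (n-1) he1, hcodd (n-2) ho2,
        show n-1-1 = n-2 by omega] at hueq
      rw [hcodd n ho, hceven (n-1) he1, hceven (n+1) he3,
        show n-1-1 = n-2 by omega, show n+1-1 = n by omega]
      have hlt := (hCond2 n (Finset.mem_range.mpr (by omega)) h3).1 ho
      exact odd_step (fib_cast_pos (by omega)) (fib_cast_pos (by omega)) hr0 hu0 hueq hlt
end

section
/- Let N ≥ 3 be an integer, let p, q be primes satisfying condition (W), and let i, n be integers with 3 ≤ i ≤ n ≤ N. Then: (i) f_{x_n(i)}(t_i) = f_{x_n(i+1)}(t_i); (ii) f_{x_n(i)}(t) > f_{x_n(i+1)}(t) for all 0 < t < t_i; and (iii) f_{x_n(i)}(t) < f_{x_n(i+1)}(t) for all t > t_i. -/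
open Real

/-! Write `m_k = max(h_k log p, h_{k-1} log q)` and `A = m_i`, `B = m_{i-1}`, `C = m_{i-2}`.
Both vectors are supported on two consecutive coordinates, and `h_{n+2-i} = h_{n+1-i} + h_{n-i}`
gives `f_{x_n(i)}(t)^t - f_{x_n(i+1)}(t)^t = h_{n+1-i} (B^t + C^t - A^t)`.
Condition (W) bounds `log q / log p` by a ratio of consecutive Fibonacci numbers, hence by `2`,
and this makes `B, C < A`. Then `t ↦ (B/A)^t + (C/A)^t` is strictly decreasing and equals `1`
at `t_i`, so `B^t + C^t - A^t` is positive before `t_i` and negative after it. -/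

theorem Nat.fib_add_one_le_two_mul_fib {k : ℕ} (hk : k ≠ 0) :
    Nat.fib (k + 1) ≤ 2 * Nat.fib k := by
  have := Nat.fib_mono (Nat.sub_le k 1)
  rw [Nat.fib_add_one hk]
  omega

theorem Nat.two_mul_fib_le_fib_add_two (k : ℕ) : 2 * Nat.fib k ≤ Nat.fib (k + 2) := by
  have := @Nat.fib_le_fib_succ k
  rw [Nat.fib_add_two]
  omega

theorem log_lt_two_mul_log_of_condW {N p q : ℕ} (hN : 3 ≤ N) (hp : 0 < log p)
    (hW : CondW N p q) : log q < 2 * log p := by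
  have hratio : ∀ k, k ≠ 0 → (Nat.fib (k + 1) : ℝ) / Nat.fib k ≤ 2 := fun k hk => by
    rw [div_le_iff₀ (by exact_mod_cast Nat.fib_pos.2 (Nat.pos_of_ne_zero hk))]
    exact_mod_cast Nat.fib_add_one_le_two_mul_fib hk
  rw [← div_lt_iff₀ hp]
  rcases hW with ⟨-, h⟩ | ⟨-, h⟩
  · have := hratio (N - 2) (by omega)
    rw [show N - 2 + 1 = N - 1 by omega] at this
    exact h.trans_le this
  · have := hratio (N - 1) (by omega)
    rw [show N - 1 + 1 = N by omega] at this
    exact h.trans_le this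

section mmax

variable {p q : ℕ}

theorem mmax_nonneg (hp : 0 ≤ log p) (k : ℕ) : 0 ≤ mmax p q k :=
  le_max_of_le_left (mul_nonneg (Nat.cast_nonneg _) hp)

theorem mmax_pos (hp : 0 < log p) {k : ℕ} (hk : 0 < k) : 0 < mmax p q k :=
  lt_max_of_lt_left (mul_pos (by exact_mod_cast Nat.fib_pos.2 hk) hp)

theorem mmax_lt_mmax_succ (hp : 0 < log p) (hpq : log q < 2 * log p) {k : ℕ} (hk : 2 ≤ k) :
    mmax p q k < mmax p q (k + 1) := by
  unfold mmax
  rw [Nat.add_sub_cancel]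
  refine max_lt (lt_max_of_lt_left ?_) (lt_max_of_lt_left ?_)
  · exact mul_lt_mul_of_pos_right (by exact_mod_cast Nat.fib_lt_fib_succ hk) hp
  · have hfib : 2 * (Nat.fib (k - 1) : ℝ) ≤ Nat.fib (k + 1) := by
      have h := Nat.two_mul_fib_le_fib_add_two (k - 1)
      rw [show k - 1 + 2 = k + 1 by omega] at h
      exact_mod_cast h
    have hpos : (0 : ℝ) < Nat.fib (k - 1) := by exact_mod_cast Nat.fib_pos.2 (by omega)
    nlinarith

theorem mmax_lt_mmax_add_two (hp : 0 < log p) (hpq : log q < 2 * log p) {k : ℕ} (hk : 1 ≤ k) :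
    mmax p q k < mmax p q (k + 2) := by
  unfold mmax
  have hfib : 2 * (Nat.fib (k - 1) : ℝ) < Nat.fib (k + 2) := by
    have h1 := Nat.two_mul_fib_le_fib_add_two (k - 1)
    have h2 := Nat.fib_lt_fib_succ (n := k + 1) (by omega)
    rw [show k - 1 + 2 = k + 1 by omega] at h1
    exact_mod_cast h1.trans_lt h2
  have hk2 : (Nat.fib k : ℝ) < Nat.fib (k + 2) := by
    have := (Nat.fib_pos (n := k + 1)).2 (by omega)
    exact_mod_cast (show Nat.fib k < Nat.fib (k + 2) by rw [Nat.fib_add_two]; omega)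
  refine max_lt (lt_max_of_lt_left ?_) (lt_max_of_lt_left ?_)
  · exact mul_lt_mul_of_pos_right hk2 hp
  · nlinarith [(Nat.cast_nonneg (Nat.fib (k - 1)) : (0 : ℝ) ≤ _)]

end mmax

section rpow

variable {a b c : ℝ}

theorem strictAnti_rpow_add_rpow_div_rpow (hb : 0 < b) (hc : 0 < c) (hba : b < a)
    (hca : c < a) : StrictAnti fun t : ℝ => (b ^ t + c ^ t) / a ^ t := by
  have ha : 0 < a := hb.trans hba
  have hsplit : (fun t : ℝ => (b ^ t + c ^ t) / a ^ t) = fun t => (b / a) ^ t + (c / a) ^ t := by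
    ext t
    rw [div_rpow hb.le ha.le, div_rpow hc.le ha.le, add_div]
  rw [hsplit]
  exact (strictAnti_rpow_of_base_lt_one (div_pos hb ha) ((div_lt_one ha).2 hba)).add
    (strictAnti_rpow_of_base_lt_one (div_pos hc ha) ((div_lt_one ha).2 hca))

theorem rpow_lt_rpow_add_rpow_iff {s t : ℝ} (hb : 0 < b) (hc : 0 < c) (hba : b < a)
    (hca : c < a) (hs : a ^ s = b ^ s + c ^ s) : a ^ t < b ^ t + c ^ t ↔ t < s := by
  have ha : 0 < a := hb.trans hba
  calc a ^ t < b ^ t + c ^ t ↔ (b ^ s + c ^ s) / a ^ s < (b ^ t + c ^ t) / a ^ t := by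
        rw [← hs, div_self (rpow_pos_of_pos ha s).ne', one_lt_div (rpow_pos_of_pos ha t)]
    _ ↔ t < s := (strictAnti_rpow_add_rpow_div_rpow hb hc hba hca).lt_iff_gt

theorem rpow_add_rpow_lt_rpow_iff {s t : ℝ} (hb : 0 < b) (hc : 0 < c) (hba : b < a)
    (hca : c < a) (hs : a ^ s = b ^ s + c ^ s) : b ^ t + c ^ t < a ^ t ↔ s < t := by
  have ha : 0 < a := hb.trans hba
  calc b ^ t + c ^ t < a ^ t ↔ (b ^ t + c ^ t) / a ^ t < (b ^ s + c ^ s) / a ^ s := by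
        rw [← hs, div_self (rpow_pos_of_pos ha s).ne', div_lt_one (rpow_pos_of_pos ha t)]
    _ ↔ s < t := (strictAnti_rpow_add_rpow_div_rpow hb hc hba hca).lt_iff_gt

end rpow

open Finset in
theorem sum_xvec_mul (g : ℕ → ℝ) (N n m : ℕ) (h3 : 3 ≤ m) (hm : m ≤ N + 1) :
    ∑ j : Fin N, (xvec N n m j : ℝ) * g (j + 1) =
      Nat.fib (n + 1 - m) * g (m - 2) + Nat.fib (n + 2 - m) * g (m - 1) := by
  have hsplit : ∀ j : Fin N, (xvec N n m j : ℝ) * g (j + 1) =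
      (if j = ⟨m - 3, by omega⟩ then Nat.fib (n + 1 - m) * g (j + 1) else 0) +
        (if j = ⟨m - 2, by omega⟩ then Nat.fib (n + 2 - m) * g (j + 1) else 0) := by
    intro j
    unfold xvec
    simp only [Fin.ext_iff]
    split_ifs <;> first | omega | simp
  simp only [hsplit, sum_add_distrib, sum_ite_eq', mem_univ, if_true]
  rw [show m - 3 + 1 = m - 2 by omega, show m - 2 + 1 = m - 1 by omega]

theorem sum_xvec_mul_sub_sum_xvec_succ_mul (g : ℕ → ℝ) {N n i : ℕ} (h3i : 3 ≤ i)
    (hin : i ≤ n) (hnN : n ≤ N) :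
    ∑ j : Fin N, (xvec N n i j : ℝ) * g (j + 1) -
        ∑ j : Fin N, (xvec N n (i + 1) j : ℝ) * g (j + 1) =
      Nat.fib (n + 1 - i) * (g (i - 1) + g (i - 2) - g i) := by
  rw [sum_xvec_mul g N n i h3i (by omega), sum_xvec_mul g N n (i + 1) (by omega) (by omega)]
  have hfib : Nat.fib (n + 2 - i) = Nat.fib (n - i) + Nat.fib (n + 1 - i) := by
    rw [show n + 2 - i = n - i + 2 by omega, Nat.fib_add_two,
      show n + 1 - i = n - i + 1 by omega]
  rw [hfib, show i + 1 - 2 = i - 1 by omega, show i + 1 - 1 = i by omega,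
    show n + 2 - (i + 1) = n + 1 - i by omega, show n + 1 - (i + 1) = n - i by omega]
  push_cast
  ring

theorem fmeas_lt_fmeas_iff {N p q : ℕ} (hp : 0 ≤ log p) {x y : Fin N → ℕ} {t : ℝ}
    (ht : 0 < t) :
    fmeas N p q x t < fmeas N p q y t ↔
      ∑ j, (x j : ℝ) * mmax p q (j + 1) ^ t < ∑ j, (y j : ℝ) * mmax p q (j + 1) ^ t := by
  have hsum_nonneg (z : Fin N → ℕ) : 0 ≤ ∑ j, (z j : ℝ) * mmax p q (j + 1) ^ t :=
    Finset.sum_nonneg fun _ _ => mul_nonneg (Nat.cast_nonneg _) (rpow_nonneg (mmax_nonneg hp _) _)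
  exact rpow_lt_rpow_iff (hsum_nonneg x) (hsum_nonneg y) (one_div_pos.2 ht)

theorem stmt5_general (N p q : ℕ) (hN : 3 ≤ N) (hp : p.Prime) (hW : CondW N p q)
    (tt : ℕ → ℝ)
    (htt : ∀ m : ℕ, 3 ≤ m →
      (0 < tt m ∧ peq p q m (tt m)) ∧ ∀ t' : ℝ, 0 < t' → peq p q m t' → t' = tt m)
    (i n : ℕ) (h3i : 3 ≤ i) (hin : i ≤ n) (hnN : n ≤ N) :
    fmeas N p q (xvec N n i) (tt i) = fmeas N p q (xvec N n (i + 1)) (tt i) ∧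
    (∀ t : ℝ, 0 < t → t < tt i →
      fmeas N p q (xvec N n (i + 1)) t < fmeas N p q (xvec N n i) t) ∧
    (∀ t : ℝ, tt i < t →
      fmeas N p q (xvec N n i) t < fmeas N p q (xvec N n (i + 1)) t) := by
  have hlogp : 0 < log p := log_pos (by exact_mod_cast hp.one_lt)
  have hlogq := log_lt_two_mul_log_of_condW hN hlogp hW
  have hBA : mmax p q (i - 1) < mmax p q i := by
    simpa [show i - 1 + 1 = i by omega] using
      mmax_lt_mmax_succ hlogp hlogq (k := i - 1) (by omega)
  have hCA : mmax p q (i - 2) < mmax p q i := by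
    simpa [show i - 2 + 2 = i by omega] using
      mmax_lt_mmax_add_two hlogp hlogq (k := i - 2) (by omega)
  have hB := mmax_pos (q := q) hlogp (k := i - 1) (by omega)
  have hC := mmax_pos (q := q) hlogp (k := i - 2) (by omega)
  obtain ⟨⟨hti, hpeq⟩, -⟩ := htt i h3i
  replace hpeq : mmax p q i ^ tt i = mmax p q (i - 1) ^ tt i + mmax p q (i - 2) ^ tt i := hpeq
  have hdiff := fun t : ℝ => sum_xvec_mul_sub_sum_xvec_succ_mul (mmax p q · ^ t) h3i hin hnN
  have hfib : (0 : ℝ) < Nat.fib (n + 1 - i) := by exact_mod_cast Nat.fib_pos.2 (by omega)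
  refine ⟨?_, fun t ht htlt => ?_, fun t htgt => ?_⟩
  · unfold fmeas
    congr 1
    have h := hdiff (tt i)
    rwa [hpeq, sub_self, mul_zero, sub_eq_zero] at h
  · rw [fmeas_lt_fmeas_iff hlogp.le ht]
    have hsign := (rpow_lt_rpow_add_rpow_iff hB hC hBA hCA hpeq).2 htlt
    linarith [hdiff t, mul_pos hfib (sub_pos.2 hsign)]
  · rw [fmeas_lt_fmeas_iff hlogp.le (hti.trans htgt)]
    have hsign := (rpow_add_rpow_lt_rpow_iff hB hC hBA hCA hpeq).2 htgt
    linarith [hdiff t, mul_neg_of_pos_of_neg hfib (sub_neg.2 hsign)]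

/-- Lemma `VectorIntersection`: for `N ≥ 3`, primes `p, q` satisfying (W),
`t_m = t_m(p,q)` the unique positive solutions of the Mahler-measure equations, and
`3 ≤ i ≤ n ≤ N`: (i) `f_{x_n(i)}(t_i) = f_{x_n(i+1)}(t_i)`;
(ii) `f_{x_n(i)}(t) > f_{x_n(i+1)}(t)` for `0 < t < t_i`;
(iii) `f_{x_n(i)}(t) < f_{x_n(i+1)}(t)` for `t > t_i`. -/
theorem stmt5 (N p q : ℕ) (hN : 3 ≤ N) (hp : p.Prime) (hq : q.Prime) (hW : CondW N p q)
    (tt : ℕ → ℝ)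
    (htt : ∀ m : ℕ, 3 ≤ m →
      (0 < tt m ∧ peq p q m (tt m)) ∧ ∀ t' : ℝ, 0 < t' → peq p q m t' → t' = tt m)
    (i n : ℕ) (h3i : 3 ≤ i) (hin : i ≤ n) (hnN : n ≤ N) :
    fmeas N p q (xvec N n i) (tt i) = fmeas N p q (xvec N n (i + 1)) (tt i) ∧
    (∀ t : ℝ, 0 < t → t < tt i →
      fmeas N p q (xvec N n (i + 1)) t < fmeas N p q (xvec N n i) t) ∧
    (∀ t : ℝ, tt i < t →
      fmeas N p q (xvec N n i) t < fmeas N p q (xvec N n (i + 1)) t) :=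
  stmt5_general N p q hN hp hW tt htt i n h3i hin hnN
end
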